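/- arXiv:1505.00506 — 5 statements merged into one kernel-verified Lean document; each statement's English description precedes it below -/
import Mathlib

section
/- If an exit link e is in free flow at time t, i.e. v_e n_e(t) ≤ F_e, and its outgoing flow equals its demand f_e^out(t) = min{v_e n_e(t), F_e} while its incoming flow satisfies 0 ≤ f_e^in(t) ≤ min{w_e(N_e − n_e(t)), F_e}, then it is in free flow at time t+1: v_e n_e(t+1) ≤ F_e. -/
/-- An exit link in free flow stays in free flow: if `v * n ≤ F`,
the outflow equals the demand `min (v*n) F` and the inflow is between `0`
and the supply `min (w*(N-n)) F`, then `v * n' ≤ F` for the updated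
occupancy `n' = n + fin - fout`. -/
theorem ctm_exit_freeflow_preserved
    (N F v w n fin fout : ℝ)
    (hv0 : 0 < v) (hv1 : v < 1) (hw0 : 0 < w) (hw1 : w < 1)
    (hff : v * n ≤ F)
    (hfout : fout = min (v * n) F)
    (hfin0 : 0 ≤ fin) (hfin : fin ≤ min (w * (N - n)) F) :
    v * (n + fin - fout) ≤ F := by
  rw [hfout, min_eq_left hff]
  have hF : fin ≤ F := le_trans hfin (min_le_right _ _)
  nlinarith
end

section
/- In an equilibrium of the freeway model, the flows f and r are uniquely determined by the incoming flows: f_{K+1} = f̄_{K+1}, and recursively for i = K+1 down to 1, (a) if f̄_{i−1} ≤ p_{i−1}^f f_i/β_i^f then f_{i−1} = f̄_{i−1} and r_i = f_i/β_i^f − f̄_{i−1}; (b) else if r̄_i ≤ p_i^r f_i/β_i^f then r_i = r̄_i and f_{i−1} = f_i/β_i^f − r̄_i; (c) else f_{i−1} = p_{i−1}^f f_i/β_i^f and r_i = p_i^r f_i/β_i^f. -/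
/-- Data of the freeway Cell Transmission Model with `K` mainline links
(indices `1,…,K`), an entrance link `0` and an exit link `K+1`. -/
structure Freeway where
  K : ℕ
  /-- free-flow speeds -/
  v : ℕ → ℝ
  /-- congestion wave speeds -/
  w : ℕ → ℝ
  /-- maximal numbers of vehicles -/
  Nmax : ℕ → ℝ
  /-- link capacities -/
  Fcap : ℕ → ℝ
  /-- outflow capacities `F_i^d` -/
  Fd : ℕ → ℝ
  /-- entrance capacity `F_0` -/
  F0 : ℝ
  /-- on-ramp capacities `R_i` -/
  R : ℕ → ℝ
  /-- mainline split ratios `β_i^f` -/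
  betaf : ℕ → ℝ
  /-- mainline priority `p_{i-1}^f` at node `i` -/
  pF : ℕ → ℝ
  /-- on-ramp priority `p_i^r` at node `i` -/
  pR : ℕ → ℝ
  /-- entrance demand flow `f_{-1}` -/
  fin : ℝ
  /-- on-ramp demands `d_i` -/
  d : ℕ → ℝ
  hv : ∀ i, 0 < v i
  hw : ∀ i, 0 < w i
  hbeta : ∀ i, 0 < betaf i ∧ betaf i ≤ 1
  hp : ∀ i, 0 ≤ pF i ∧ 0 ≤ pR i ∧ pF i + pR i = 1
  hd : ∀ i, 0 ≤ d i
  hR : ∀ i, 0 ≤ R i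
  hfin : 0 ≤ fin
  hF0 : 0 ≤ F0
  hFd : ∀ i, 0 < Fd i ∧ Fd i ≤ betaf i * Fcap i
  /-- the free-flow no-constraint condition `F/v + F/w ≤ N` -/
  hN : ∀ i, Fcap i / v i + Fcap i / w i ≤ Nmax i

/-- The merge node model (Tampère et al.) for one mainline input and one
on-ramp input: demands `fd, rd`, supply `fs`, priorities `pf, pr`. -/
noncomputable def mergeFlow (fd rd fs pf pr : ℝ) : ℝ × ℝ :=
  if fd + rd ≤ fs then (fd, rd)
  else if fd ≤ pf * fs then (fd, fs - fd)
  else if rd ≤ pr * fs then (fs - rd, rd)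
  else (pf * fs, pr * fs)

/-- Outflow demand of mainline link `i` with occupancy `n i`. -/
noncomputable def fdem (fw : Freeway) (n : ℕ → ℝ) (i : ℕ) : ℝ :=
  min (fw.betaf i * fw.v i * n i) (fw.Fd i)

/-- Inflow supply of mainline link `i` with occupancy `n i`. -/
noncomputable def fsup (fw : Freeway) (n : ℕ → ℝ) (i : ℕ) : ℝ :=
  min (fw.w i * (fw.Nmax i - n i)) (fw.Fcap i)

/-- `(n, f, r)` is an equilibrium of the freeway model: there are a constant
entrance demand `fdem0` and constant ramp demands `rdem` (coming from fixed or
steadily growing queues) such that all node flows reproduce themselves, the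
densities are constant (`f i = β_i^f (f (i-1) + r i)`) and the exit link is
uncongested. -/
def IsEquilibrium (fw : Freeway) (n f r : ℕ → ℝ) : Prop :=
  ∃ fdem0 : ℝ, ∃ rdem : ℕ → ℝ,
    -- entrance: queue constant (`f 0 = fin`) or growing (demand saturated)
    ((f 0 = fw.fin ∨ fdem0 = fw.F0) ∧ f 0 ≤ fdem0 ∧ fdem0 ≤ fw.F0 ∧ f 0 ≤ fw.fin) ∧
    -- on-ramps: queue constant (`r i = d i`) or growing (demand saturated)
    (∀ i, 1 ≤ i → i ≤ fw.K →
      (r i = fw.d i ∨ rdem i = fw.R i) ∧ r i ≤ rdem i ∧ rdem i ≤ fw.R i ∧ r i ≤ fw.d i) ∧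
    -- no on-ramp at the last node
    rdem (fw.K + 1) = 0 ∧
    -- density bounds
    (∀ i, 1 ≤ i → i ≤ fw.K + 1 → 0 ≤ n i ∧ n i ≤ fw.Nmax i) ∧
    -- node flows given by the merge node model
    (∀ i, 1 ≤ i → i ≤ fw.K + 1 →
      (f (i - 1), r i) =
        mergeFlow (if i = 1 then fdem0 else fdem fw n (i - 1)) (rdem i)
          (fsup fw n i) (fw.pF i) (fw.pR i)) ∧
    -- constant densities: conservation at every link
    (∀ i, 1 ≤ i → i ≤ fw.K + 1 → f i = fw.betaf i * (f (i - 1) + r i)) ∧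
    -- the exit link is uncongested and discharges its demand
    fw.v (fw.K + 1) * n (fw.K + 1) ≤ fw.Fcap (fw.K + 1) ∧
    f (fw.K + 1) = fdem fw n (fw.K + 1)

/-- Maximum on-ramp flows `r̄_i = min{d_i, R_i}` (and `0` outside `1,…,K`). -/
noncomputable def rbar (fw : Freeway) (i : ℕ) : ℝ :=
  if 1 ≤ i ∧ i ≤ fw.K then min (fw.d i) (fw.R i) else 0

/-- Maximum flows `f̄`: `f̄_0 = min{f_{-1}, F_0}`,
`f̄_i = min{β_i^f (f̄_{i-1} + r̄_i), F_i^d}`. -/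
noncomputable def fbar (fw : Freeway) : ℕ → ℝ
  | 0 => min fw.fin fw.F0
  | i + 1 => min (fw.betaf (i + 1) * (fbar fw i + rbar fw (i + 1))) (fw.Fd (i + 1))

/-- The uncapacitated flows `f_i(f̄_0, r̄)` obtained by propagating the maximal
entrance flows through the split ratios with no capacity constraints. -/
noncomputable def flin (fw : Freeway) : ℕ → ℝ
  | 0 => min fw.fin fw.F0
  | i + 1 => fw.betaf (i + 1) * (flin fw i + rbar fw (i + 1))


lemma mergeFlow_cases {fd rd fs pf pr a b : ℝ}
    (h : (a, b) = mergeFlow fd rd fs pf pr) :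
    (fd + rd ≤ fs ∧ a = fd ∧ b = rd) ∨
    (fs < fd + rd ∧ fd ≤ pf * fs ∧ a = fd ∧ b = fs - fd) ∨
    (fs < fd + rd ∧ pf * fs < fd ∧ rd ≤ pr * fs ∧ a = fs - rd ∧ b = rd) ∨
    (fs < fd + rd ∧ pf * fs < fd ∧ pr * fs < rd ∧ a = pf * fs ∧ b = pr * fs) := by
  unfold mergeFlow at h
  split_ifs at h with h1 h2 h3 <;> rw [Prod.mk.injEq] at h
  · exact Or.inl ⟨h1, h⟩
  · exact Or.inr (Or.inl ⟨lt_of_not_ge h1, h2, h⟩)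
  · exact Or.inr (Or.inr (Or.inl ⟨lt_of_not_ge h1, lt_of_not_ge h2, h3, h⟩))
  · exact Or.inr (Or.inr (Or.inr ⟨lt_of_not_ge h1, lt_of_not_ge h2, lt_of_not_ge h3, h⟩))

/-- Equilibrium flows are uniquely determined by the incoming flows:
`f_{K+1} = f̄_{K+1}`, and going upstream, at each node `i` the pair
`(f_{i-1}, r_i)` is recovered from `f_i` by the three-case rule of
Theorem 1. -/
theorem equilibrium_flows_unique
    (fw : Freeway) (n f r : ℕ → ℝ) (h : IsEquilibrium fw n f r) :
    f (fw.K + 1) = fbar fw (fw.K + 1) ∧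
    ∀ i, 1 ≤ i → i ≤ fw.K + 1 →
      (fbar fw (i - 1) ≤ fw.pF i * (f i / fw.betaf i) →
        f (i - 1) = fbar fw (i - 1) ∧
        r i = f i / fw.betaf i - fbar fw (i - 1)) ∧
      (¬ fbar fw (i - 1) ≤ fw.pF i * (f i / fw.betaf i) →
        rbar fw i ≤ fw.pR i * (f i / fw.betaf i) →
        r i = rbar fw i ∧
        f (i - 1) = f i / fw.betaf i - rbar fw i) ∧
      (¬ fbar fw (i - 1) ≤ fw.pF i * (f i / fw.betaf i) →
        ¬ rbar fw i ≤ fw.pR i * (f i / fw.betaf i) →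
        f (i - 1) = fw.pF i * (f i / fw.betaf i) ∧
        r i = fw.pR i * (f i / fw.betaf i)) := by
  obtain ⟨fdem0, rdem, hent, hramp, hrK0, hdens, hnode, hcons, hex1, hex2⟩ := h
  have hβ : ∀ i, 0 < fw.betaf i := fun i => (fw.hbeta i).1
  have hβ1 : ∀ i, fw.betaf i ≤ 1 := fun i => (fw.hbeta i).2
  have hpF0 : ∀ i, 0 ≤ fw.pF i := fun i => (fw.hp i).1
  have hpR0 : ∀ i, 0 ≤ fw.pR i := fun i => (fw.hp i).2.1
  have hpsum : ∀ i, fw.pF i + fw.pR i = 1 := fun i => (fw.hp i).2.2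
  have hFd0 : ∀ i, 0 < fw.Fd i := fun i => (fw.hFd i).1
  have hFcap : ∀ i, 0 < fw.Fcap i := by
    intro i
    have h1 := (fw.hFd i).1; have h2 := (fw.hFd i).2
    nlinarith [hβ i, hβ1 i]
  have hFdcap : ∀ i, fw.Fd i / fw.betaf i ≤ fw.Fcap i := by
    intro i
    rw [div_le_iff₀ (hβ i)]
    calc fw.Fd i ≤ fw.betaf i * fw.Fcap i := (fw.hFd i).2
    _ = fw.Fcap i * fw.betaf i := mul_comm _ _
  have hsum : ∀ j, j + 1 ≤ fw.K + 1 →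
      f j + r (j + 1) = f (j + 1) / fw.betaf (j + 1) := by
    intro j hj
    have hc := hcons (j + 1) (by omega) hj
    simp only [Nat.add_sub_cancel] at hc
    rw [eq_div_iff (ne_of_gt (hβ (j + 1)))]
    linear_combination -hc
  have hnode' : ∀ j, j + 1 ≤ fw.K + 1 →
      (f j, r (j + 1)) = mergeFlow (if j = 0 then fdem0 else fdem fw n j)
        (rdem (j + 1)) (fsup fw n (j + 1)) (fw.pF (j + 1)) (fw.pR (j + 1)) := by
    intro j hj
    have h := hnode (j + 1) (by omega) hj
    simp only [Nat.add_sub_cancel] at h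
    cases j with
    | zero => simpa using h
    | succ k => simpa using h
  have hfbarFd : ∀ j, fbar fw (j + 1) ≤ fw.Fd (j + 1) := by
    intro j; rw [fbar]; exact min_le_right _ _
  have hfbarβ : ∀ j, fbar fw (j + 1) ≤ fw.betaf (j + 1) * (fbar fw j + rbar fw (j + 1)) := by
    intro j; rw [fbar]; exact min_le_left _ _
  have hfs0 : ∀ i, 1 ≤ i → i ≤ fw.K + 1 → 0 ≤ fsup fw n i := by
    intro i h1 h2
    have hn := (hdens i h1 h2).2
    have hw := fw.hw i
    simp only [fsup]
    exact le_min (by nlinarith) (le_of_lt (hFcap i))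
  have hsupcap : ∀ i, fw.v i * n i ≤ fw.Fcap i → fsup fw n i = fw.Fcap i := by
    intro i hvn
    have hvpos := fw.hv i; have hwpos := fw.hw i
    have hNi := fw.hN i
    have hn : n i ≤ fw.Fcap i / fw.v i := by
      rw [le_div_iff₀ hvpos]; nlinarith
    have hcap : fw.Fcap i ≤ fw.w i * (fw.Nmax i - n i) := by
      have h2 : fw.Fcap i / fw.w i ≤ fw.Nmax i - n i := by linarith
      calc fw.Fcap i = fw.w i * (fw.Fcap i / fw.w i) := by field_simp
      _ ≤ fw.w i * (fw.Nmax i - n i) := by nlinarith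
    simp only [fsup]; exact min_eq_right hcap
  have hrbarK : rbar fw (fw.K + 1) = 0 := by
    simp only [rbar]; rw [if_neg (by omega)]
  have hrKp1 : r (fw.K + 1) = 0 := by
    have h := hnode' fw.K le_rfl
    have hfs := hfs0 (fw.K + 1) (by omega) le_rfl
    have hpf1 : fw.pF (fw.K + 1) ≤ 1 := by linarith [hpsum (fw.K + 1), hpR0 (fw.K + 1)]
    rcases mergeFlow_cases h with ⟨_, _, hb⟩ | ⟨h1, h2, _, hb⟩ | ⟨_, _, _, _, hb⟩ | ⟨_, _, h3, _, hb⟩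
    · rw [hb, hrK0]
    · exfalso
      rw [hrK0] at h1
      nlinarith [hpF0 (fw.K + 1)]
    · rw [hb, hrK0]
    · exfalso
      rw [hrK0] at h3
      nlinarith [hpR0 (fw.K + 1)]
  have hrr : ∀ j, j + 1 ≤ fw.K + 1 → r (j + 1) = rdem (j + 1) → r (j + 1) = rbar fw (j + 1) := by
    intro j hj hr
    rcases Nat.lt_or_ge j fw.K with hlt | hge
    · obtain ⟨hor, h1, h2, h3⟩ := hramp (j + 1) (by omega) (by omega)
      have hle : r (j + 1) ≤ min (fw.d (j + 1)) (fw.R (j + 1)) := le_min h3 (by linarith)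
      have hge' : min (fw.d (j + 1)) (fw.R (j + 1)) ≤ r (j + 1) := by
        rcases hor with hc | hc
        · rw [hc]; exact min_le_left _ _
        · rw [hr, hc]; exact min_le_right _ _
      have heq : r (j + 1) = min (fw.d (j + 1)) (fw.R (j + 1)) := le_antisymm hle hge'
      rw [heq]; simp only [rbar]; rw [if_pos ⟨by omega, by omega⟩]
    · have hjk : j = fw.K := by omega
      subst hjk
      rw [hrKp1, hrbarK]
  have hrle : ∀ j, j + 1 ≤ fw.K + 1 → r (j + 1) ≤ rbar fw (j + 1) := by
    intro j hj
    rcases Nat.lt_or_ge j fw.K with hlt | hge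
    · obtain ⟨hor, h1, h2, h3⟩ := hramp (j + 1) (by omega) (by omega)
      simp only [rbar]; rw [if_pos ⟨by omega, by omega⟩]
      exact le_min h3 (by linarith)
    · have hjk : j = fw.K := by omega
      subst hjk
      rw [hrKp1, hrbarK]
  have hffd : ∀ j, 1 ≤ j → j ≤ fw.K → f j ≤ fdem fw n j := by
    intro j h1 h2
    have h := hnode' j (by omega)
    rw [if_neg (by omega)] at h
    rcases mergeFlow_cases h with ⟨_, ha, _⟩ | ⟨_, _, ha, _⟩ | ⟨hx, _, _, ha, _⟩ | ⟨_, hx, _, ha, _⟩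
    · exact le_of_eq ha
    · exact le_of_eq ha
    · rw [ha]; linarith
    · rw [ha]; linarith
  have hfFd : ∀ j, 1 ≤ j → j ≤ fw.K + 1 → f j ≤ fw.Fd j := by
    intro j h1 h2
    have hdem : fdem fw n j ≤ fw.Fd j := by simp only [fdem]; exact min_le_right _ _
    rcases Nat.lt_or_ge j (fw.K + 1) with hlt | hge
    · exact (hffd j h1 (by omega)).trans hdem
    · have hjk : j = fw.K + 1 := by omega
      subst hjk
      rw [hex2]; exact hdem
  obtain ⟨hor0, h01, h02, h03⟩ := hent
  have hf0le : f 0 ≤ fbar fw 0 := by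
    rw [fbar]; exact le_min h03 (by linarith)
  have hf0eq : f 0 = fdem0 → f 0 = fbar fw 0 := by
    intro hfe
    refine le_antisymm hf0le ?_
    rw [fbar]
    rcases hor0 with hc | hc
    · rw [hc]; exact min_le_left _ _
    · rw [hfe, hc]; exact min_le_right _ _
  have hfle : ∀ j, j ≤ fw.K + 1 → f j ≤ fbar fw j := by
    intro j
    induction j with
    | zero => intro _; exact hf0le
    | succ k ih =>
      intro hk
      have hc := hcons (k + 1) (by omega) hk
      simp only [Nat.add_sub_cancel] at hc
      have h1 : f (k + 1) ≤ fw.betaf (k + 1) * (fbar fw k + rbar fw (k + 1)) := by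
        rw [hc]
        exact mul_le_mul_of_nonneg_left (add_le_add (ih (by omega)) (hrle k hk)) (le_of_lt (hβ (k + 1)))
      rw [fbar]
      exact le_min h1 (hfFd (k + 1) (by omega) hk)
  have keyA : ∀ j, j + 1 ≤ fw.K + 1 → f (j + 1) < fbar fw (j + 1) →
      fw.v (j + 1) * n (j + 1) ≤ fw.Fcap (j + 1) →
      f j = (if j = 0 then fdem0 else fdem fw n j) ∧ r (j + 1) = rbar fw (j + 1) := by
    intro j hj hlt hvn
    have hfs := hsupcap (j + 1) hvn
    have hslt : f (j + 1) / fw.betaf (j + 1) < fw.Fcap (j + 1) := by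
      have h1 : f (j + 1) < fw.Fd (j + 1) := lt_of_lt_of_le hlt (hfbarFd j)
      have h2 : f (j + 1) / fw.betaf (j + 1) < fw.Fd (j + 1) / fw.betaf (j + 1) := by
        exact div_lt_div_of_pos_right h1 (hβ (j + 1))
      exact lt_of_lt_of_le h2 (hFdcap (j + 1))
    have hs := hsum j hj
    rcases mergeFlow_cases (hnode' j hj) with ⟨_, ha, hb⟩ | ⟨_, _, ha, hb⟩ | ⟨_, _, _, ha, hb⟩ | ⟨_, _, _, ha, hb⟩
    · exact ⟨ha, hrr j hj hb⟩
    · exfalso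
      rw [ha, hb] at hs
      rw [hfs] at hs
      linarith
    · exfalso
      rw [ha, hb] at hs
      rw [hfs] at hs
      linarith
    · exfalso
      rw [ha, hb] at hs
      rw [hfs] at hs
      have hp := hpsum (j + 1)
      have hceq : fw.Fcap (j + 1) = f (j + 1) / fw.betaf (j + 1) := by
        linear_combination hs - fw.Fcap (j + 1) * hp
      linarith
  have lemA : ∀ j, j + 1 ≤ fw.K + 1 → f (j + 1) < fbar fw (j + 1) →
      fw.v (j + 1) * n (j + 1) ≤ fw.Fcap (j + 1) → False := by
    intro j
    induction j with
    | zero =>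
      intro hj hlt hvn
      obtain ⟨ha, hb⟩ := keyA 0 hj hlt hvn
      rw [if_pos rfl] at ha
      have h0 := hf0eq ha
      have hc := hcons 1 le_rfl hj
      norm_num at hc
      rw [h0, hb] at hc
      have hge : fbar fw 1 ≤ f 1 := by rw [hc]; exact hfbarβ 0
      linarith
    | succ k ih =>
      intro hj hlt hvn
      obtain ⟨ha, hb⟩ := keyA (k + 1) hj hlt hvn
      rw [if_neg (by omega)] at ha
      have hs := hsum (k + 1) hj
      have hd1 : f (k + 2) / fw.betaf (k + 2) < fbar fw (k + 1) + rbar fw (k + 2) := by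
        have h1 : f (k + 2) < fw.betaf (k + 2) * (fbar fw (k + 1) + rbar fw (k + 2)) :=
          lt_of_lt_of_le hlt (hfbarβ (k + 1))
        rw [div_lt_iff₀ (hβ (k + 2))]
        nlinarith
      have hflt : f (k + 1) < fbar fw (k + 1) := by
        rw [hb] at hs; linarith
      have hFdle : fbar fw (k + 1) ≤ fw.Fd (k + 1) := hfbarFd k
      have hmin : f (k + 1) = fw.betaf (k + 1) * fw.v (k + 1) * n (k + 1) := by
        rcases le_total (fw.betaf (k + 1) * fw.v (k + 1) * n (k + 1)) (fw.Fd (k + 1)) with hle | hle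
        · rw [ha]; simp only [fdem]; exact min_eq_left hle
        · exfalso
          rw [ha] at hflt; simp only [fdem] at hflt
          rw [min_eq_right hle] at hflt; linarith
      have hvn' : fw.v (k + 1) * n (k + 1) ≤ fw.Fcap (k + 1) := by
        have hble : fw.betaf (k + 1) * (fw.v (k + 1) * n (k + 1)) ≤ fw.Fd (k + 1) := by
          rw [← mul_assoc, ← hmin]; linarith
        have := (fw.hFd (k + 1)).2
        nlinarith [hβ (k + 1)]
      exact ih (by omega) hflt hvn'
  have part1 : f (fw.K + 1) = fbar fw (fw.K + 1) := by
    refine le_antisymm (hfle (fw.K + 1) le_rfl) ?_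
    by_contra hcon
    push_neg at hcon
    exact lemA fw.K le_rfl hcon hex1
  have hfdeq : ∀ j, j ≤ fw.K → f j = (if j = 0 then fdem0 else fdem fw n j) →
      f j = fbar fw j := by
    intro j hjK hfd
    cases j with
    | zero => rw [if_pos rfl] at hfd; exact hf0eq hfd
    | succ k =>
      rw [if_neg (by omega)] at hfd
      refine le_antisymm (hfle (k + 1) (by omega)) ?_
      by_contra hcon
      push_neg at hcon
      have hFdle : fbar fw (k + 1) ≤ fw.Fd (k + 1) := hfbarFd k
      have hmin : f (k + 1) = fw.betaf (k + 1) * fw.v (k + 1) * n (k + 1) := by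
        rcases le_total (fw.betaf (k + 1) * fw.v (k + 1) * n (k + 1)) (fw.Fd (k + 1)) with hle | hle
        · rw [hfd]; simp only [fdem]; exact min_eq_left hle
        · exfalso
          rw [hfd] at hcon; simp only [fdem] at hcon
          rw [min_eq_right hle] at hcon; linarith
      have hvn' : fw.v (k + 1) * n (k + 1) ≤ fw.Fcap (k + 1) := by
        have hble : fw.betaf (k + 1) * (fw.v (k + 1) * n (k + 1)) ≤ fw.Fd (k + 1) := by
          rw [← mul_assoc, ← hmin]; linarith
        have := (fw.hFd (k + 1)).2
        nlinarith [hβ (k + 1)]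
      exact lemA k (by omega) hcon hvn'
  have main : ∀ j, j + 1 ≤ fw.K + 1 →
      (f j = fbar fw j ∧ r (j + 1) = rbar fw (j + 1) ∧
        fbar fw j + rbar fw (j + 1) = f (j + 1) / fw.betaf (j + 1)) ∨
      (f j = fbar fw j ∧ fbar fw j ≤ fw.pF (j + 1) * (f (j + 1) / fw.betaf (j + 1))) ∨
      (r (j + 1) = rbar fw (j + 1) ∧
        rbar fw (j + 1) ≤ fw.pR (j + 1) * (f (j + 1) / fw.betaf (j + 1))) ∨
      (f j = fw.pF (j + 1) * (f (j + 1) / fw.betaf (j + 1)) ∧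
        r (j + 1) = fw.pR (j + 1) * (f (j + 1) / fw.betaf (j + 1))) := by
    intro j hj
    have hs := hsum j hj
    rcases mergeFlow_cases (hnode' j hj) with ⟨_, ha, hb⟩ | ⟨_, h2, ha, hb⟩ | ⟨_, _, h3, ha, hb⟩ | ⟨_, _, _, ha, hb⟩
    · left
      have hfb := hfdeq j (by omega) ha
      have hrb := hrr j hj hb
      refine ⟨hfb, hrb, ?_⟩
      rw [← hfb, ← hrb]; exact hs
    · right; left
      have hfb := hfdeq j (by omega) ha
      have hfseq : fsup fw n (j + 1) = f (j + 1) / fw.betaf (j + 1) := by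
        rw [ha, hb] at hs; linarith
      refine ⟨hfb, ?_⟩
      rw [← hfseq, ← hfb, ha]
      exact h2
    · right; right; left
      have hrb := hrr j hj hb
      have hfseq : fsup fw n (j + 1) = f (j + 1) / fw.betaf (j + 1) := by
        rw [ha, hb] at hs; linarith
      refine ⟨hrb, ?_⟩
      rw [← hfseq, ← hrb, hb]
      exact h3
    · right; right; right
      have hp := hpsum (j + 1)
      have hfseq : fsup fw n (j + 1) = f (j + 1) / fw.betaf (j + 1) := by
        rw [ha, hb] at hs
        linear_combination hs - fsup fw n (j + 1) * hp
      exact ⟨by rw [ha, hfseq], by rw [hb, hfseq]⟩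
  refine ⟨part1, ?_⟩
  intro i hi1 hi2
  obtain ⟨j, rfl⟩ : ∃ j, i = j + 1 := ⟨i - 1, by omega⟩
  simp only [Nat.add_sub_cancel]
  have hs := hsum j hi2
  have hflej := hfle j (by omega)
  have hrlej := hrle j hi2
  have hps : fw.pF (j + 1) * (f (j + 1) / fw.betaf (j + 1)) +
      fw.pR (j + 1) * (f (j + 1) / fw.betaf (j + 1)) = f (j + 1) / fw.betaf (j + 1) := by
    rw [← add_mul, hpsum, one_mul]
  rcases main j hi2 with ⟨ha1, ha2, ha3⟩ | ⟨ha1, ha2⟩ | ⟨ha1, ha2⟩ | ⟨ha1, ha2⟩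
  · refine ⟨fun hA => ⟨ha1, by linarith⟩, fun hnA hB => ⟨ha2, by linarith⟩,
      fun hnA hnB => ?_⟩
    push_neg at hnA hnB
    exact absurd ha3 (by intro hq; linarith)
  · exact ⟨fun hA => ⟨ha1, by linarith⟩, fun hnA hB => absurd ha2 hnA,
      fun hnA hnB => absurd ha2 hnA⟩
  · refine ⟨fun hA => ⟨by linarith, by linarith⟩, fun hnA hB => ⟨ha1, by linarith⟩,
      fun hnA hnB => absurd ha2 hnB⟩
  · exact ⟨fun hA => ⟨by linarith, by linarith⟩, fun hnA hB => ⟨by linarith, by linarith⟩,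
      fun hnA hnB => ⟨ha1, ha2⟩⟩
end

section
/- If the incoming flow is feasible, i.e., f_i(f̄_0, r̄) ≤ F_i^d for all i = 1,…,K+1 where f_i(f_0, r) = f_0 ∏_{k=1}^i β_k^f + Σ_{j=1}^i r_j ∏_{k=j}^i β_k^f, then the equilibrium flows equal the maximum flows: r = r̄ and f_i = f̄_i = f_i(f̄_0, r̄) for all i. -/
lemma mergeFlow_fst_le (fd rd fs pf pr : ℝ) : (mergeFlow fd rd fs pf pr).1 ≤ fd := by
  unfold mergeFlow
  split_ifs with h1 h2 h3 <;> simp <;> push_neg at * <;> linarith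

lemma mergeFlow_snd_le (fd rd fs pf pr : ℝ) : (mergeFlow fd rd fs pf pr).2 ≤ rd := by
  unfold mergeFlow
  split_ifs with h1 h2 h3 <;> simp <;> push_neg at * <;> linarith

lemma mergeFlow_of_le {fd rd fs : ℝ} (pf pr : ℝ) (h : fd + rd ≤ fs) :
    mergeFlow fd rd fs pf pr = (fd, rd) := by
  simp [mergeFlow, h]

lemma mergeFlow_sum {fd rd fs pf pr : ℝ} (hp : pf + pr = 1) (h : ¬ fd + rd ≤ fs) :
    (mergeFlow fd rd fs pf pr).1 + (mergeFlow fd rd fs pf pr).2 = fs := by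
  unfold mergeFlow
  split_ifs with h1 h2
  · show fd + (fs - fd) = fs; ring
  · show fs - rd + rd = fs; ring
  · show pf * fs + pr * fs = fs; linear_combination fs * hp

/-- If the incoming flow is feasible, i.e. `f_i(f̄_0, r̄) ≤ F_i^d` for all
`i = 1,…,K+1`, then the equilibrium flows equal the maximum flows:
`r = r̄` and `f = f̄ = f(f̄_0, r̄)`. -/
theorem feasible_inflow_equilibrium_flows
    (fw : Freeway) (n f r : ℕ → ℝ) (h : IsEquilibrium fw n f r)
    (hfeas : ∀ i, 1 ≤ i → i ≤ fw.K + 1 → flin fw i ≤ fw.Fd i) :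
    (∀ i, 1 ≤ i → i ≤ fw.K → r i = rbar fw i) ∧
    (∀ i, i ≤ fw.K + 1 → f i = flin fw i ∧ fbar fw i = flin fw i) := by
  obtain ⟨fdem0, rdem, hent, hramp, hrtop, hdens, hmerge, hcons, hexit1, hexit2⟩ := h
  have hβ : ∀ i, 0 < fw.betaf i := fun i => (fw.hbeta i).1
  -- `rbar` at interior / top nodes
  have hrbar_int : ∀ i, 1 ≤ i → i ≤ fw.K → rbar fw i = min (fw.d i) (fw.R i) := by
    intro i h1 h2; simp [rbar, h1, h2]
  have hrbar_top : rbar fw (fw.K + 1) = 0 := by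
    simp [rbar]
  -- on-ramp flows are below `rbar`
  have hrle : ∀ i, 1 ≤ i → i ≤ fw.K + 1 → r i ≤ rbar fw i := by
    intro i h1 h2
    have hm := hmerge i h1 h2
    have hsnd : r i ≤ rdem i := by
      have := mergeFlow_snd_le (if i = 1 then fdem0 else fdem fw n (i - 1)) (rdem i)
        (fsup fw n i) (fw.pF i) (fw.pR i)
      rw [← hm] at this; exact this
    rcases Nat.lt_or_ge i (fw.K + 1) with hi | hi
    · have hiK : i ≤ fw.K := by omega
      obtain ⟨-, h2', h3', h4'⟩ := hramp i h1 hiK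
      rw [hrbar_int i h1 hiK]
      exact le_min h4' (le_trans hsnd h3')
    · have : i = fw.K + 1 := by omega
      subst this
      rw [hrbar_top, ← hrtop]; exact hsnd
  -- upper bound : `f i ≤ flin fw i`
  have hub : ∀ i, i ≤ fw.K + 1 → f i ≤ flin fw i := by
    intro i
    induction i with
    | zero =>
      intro _
      exact le_min hent.2.2.2 (le_trans hent.2.1 hent.2.2.1)
    | succ i ih =>
      intro hi
      have hc := hcons (i + 1) (by omega) hi
      simp only [Nat.add_sub_cancel] at hc
      rw [hc]
      show fw.betaf (i+1) * (f i + r (i+1)) ≤ fw.betaf (i+1) * (flin fw i + rbar fw (i+1))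
      have h1 := ih (by omega)
      have h2 := hrle (i + 1) (by omega) hi
      have := (hβ (i + 1)).le
      nlinarith
  -- the invariant propagated backwards from the exit
  set P : ℕ → Prop := fun i => (1 ≤ i ∧ f i = fdem fw n i) ∨ f i = flin fw i with hP
  -- the key step at a node
  have hstep : ∀ i, i + 1 ≤ fw.K + 1 → P (i + 1) → P i ∧ r (i + 1) = rbar fw (i + 1) := by
    intro i hm hPi
    have hc := hcons (i + 1) (by omega) hm
    simp only [Nat.add_sub_cancel] at hc
    have hmg := hmerge (i + 1) (by omega) hm
    simp only [Nat.add_sub_cancel] at hmg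
    set fd : ℝ := (if i + 1 = 1 then fdem0 else fdem fw n i) with hfd
    -- helper to obtain `r (i+1) = rbar` from `r (i+1) = rdem (i+1)`
    have hr_of_rdem : r (i + 1) = rdem (i + 1) → r (i + 1) = rbar fw (i + 1) := by
      intro hre
      rcases Nat.lt_or_ge (i + 1) (fw.K + 1) with hi | hi
      · have hiK : i + 1 ≤ fw.K := by omega
        obtain ⟨hd1, hd2, hd3, hd4⟩ := hramp (i + 1) (by omega) hiK
        rw [hrbar_int (i + 1) (by omega) hiK]
        refine le_antisymm (le_min hd4 (hre ▸ hd3)) ?_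
        rcases hd1 with he | he
        · rw [he]; exact min_le_left _ _
        · rw [← he, ← hre]; exact min_le_right _ _
      · have : i + 1 = fw.K + 1 := by omega
        rw [this, hrbar_top]
        rw [this] at hre; rw [hre, hrtop]
    rcases hPi with ⟨-, hP1⟩ | hP2
    · -- link i+1 discharges its demand
      by_cases hbr : fd + rdem (i + 1) ≤ fsup fw n (i + 1)
      · -- the merge is unconstrained
        rw [mergeFlow_of_le _ _ hbr] at hmg
        have h1 : f i = fd := congrArg Prod.fst hmg
        have h2 : r (i + 1) = rdem (i + 1) := congrArg Prod.snd hmg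
        refine ⟨?_, hr_of_rdem h2⟩
        rcases Nat.eq_zero_or_pos i with hi0 | hi0
        · subst hi0
          right
          have h1' : f 0 = fdem0 := by simpa [hfd] using h1
          obtain ⟨he1, he2, he3, he4⟩ := hent
          show f 0 = min fw.fin fw.F0
          refine le_antisymm (le_min he4 (le_trans he2 he3)) ?_
          rcases he1 with he | he
          · exact le_trans (min_le_left _ _) (le_of_eq he.symm)
          · exact le_trans (min_le_right _ _) (le_of_eq (h1'.trans he).symm)
        · left
          refine ⟨hi0, ?_⟩
          rw [h1, hfd, if_neg (by omega)]
      · -- the merge is supply constrained: derive `f (i+1) = Fd (i+1)`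
        have hsum : f i + r (i + 1) = fsup fw n (i + 1) := by
          have := mergeFlow_sum (fw.hp (i + 1)).2.2 hbr
          rw [← hmg] at this; exact this
        have hfs : f (i + 1) = fw.betaf (i + 1) * fsup fw n (i + 1) := by
          rw [hc, hsum]
        have hFdcap := fw.hFd (i + 1)
        have hFdEq : f (i + 1) = fw.Fd (i + 1) := by
          have hle : f (i + 1) ≤ fw.Fd (i + 1) := by
            rw [hP1]; exact min_le_right _ _
          rcases min_cases (fw.w (i+1) * (fw.Nmax (i+1) - n (i+1))) (fw.Fcap (i+1))
            with ⟨hs, hsle⟩ | ⟨hs, hsge⟩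
          · -- supply is `w (Nmax - n) ≤ Fcap`
            rcases min_cases (fw.betaf (i+1) * fw.v (i+1) * n (i+1)) (fw.Fd (i+1))
              with ⟨he, hle'⟩ | ⟨he, _⟩
            · -- demand is `β v n ≤ Fd`
              have hvw : fw.v (i+1) * n (i+1) = fw.w (i+1) * (fw.Nmax (i+1) - n (i+1)) := by
                have h1 : fw.betaf (i+1) * (fw.v (i+1) * n (i+1)) =
                    fw.betaf (i+1) * (fw.w (i+1) * (fw.Nmax (i+1) - n (i+1))) := by
                  have e1 : f (i+1) = fw.betaf (i+1) * fw.v (i+1) * n (i+1) := by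
                    rw [hP1, fdem, he]
                  have e2 : f (i+1) = fw.betaf (i+1) * (fw.w (i+1) * (fw.Nmax (i+1) - n (i+1))) := by
                    rw [hfs, fsup, hs]
                  rw [← mul_assoc, ← e1, ← e2]
                exact mul_left_cancel₀ (hβ (i+1)).ne' h1
              -- from `hN`, `Fcap ≤ v n`
              have hv := fw.hv (i+1); have hw := fw.hw (i+1)
              have hNN := fw.hN (i+1)
              have hN' : fw.Fcap (i+1) * fw.w (i+1) + fw.Fcap (i+1) * fw.v (i+1) ≤
                  fw.Nmax (i+1) * (fw.v (i+1) * fw.w (i+1)) := by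
                rw [div_add_div _ _ hv.ne' hw.ne', div_le_iff₀ (by positivity)] at hNN
                linarith
              have hcap : fw.Fcap (i+1) ≤ fw.v (i+1) * n (i+1) := by
                have hsum2 : fw.w (i+1) * fw.Nmax (i+1) =
                    (fw.v (i+1) + fw.w (i+1)) * n (i+1) := by linarith [hvw]
                nlinarith [mul_pos hv hw, add_pos hv hw]
              -- hence `β v n ≥ β Fcap ≥ Fd`, together with `≤ Fd` gives equality
              have : fw.Fd (i+1) ≤ fw.betaf (i+1) * fw.v (i+1) * n (i+1) := by
                nlinarith [(hβ (i+1)).le, hFdcap.2]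
              rw [hP1, fdem, he]; linarith
            · rw [hP1, fdem, he]
          · -- supply is `Fcap`
            have : f (i + 1) = fw.betaf (i+1) * fw.Fcap (i+1) := by rw [hfs, fsup, hs]
            linarith [hFdcap.2]
        -- feasibility forces equality of everything
        have hfeas1 := hfeas (i + 1) (by omega) hm
        have hub1 := hub (i + 1) hm
        have hfeq : f (i + 1) = flin fw (i + 1) := le_antisymm hub1 (by rw [hFdEq]; exact hfeas1)
        have hubi := hub i (by omega)
        have hri := hrle (i + 1) (by omega) hm
        have hflin : flin fw (i + 1) = fw.betaf (i+1) * (flin fw i + rbar fw (i+1)) := rfl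
        have hcanc : f i + r (i + 1) = flin fw i + rbar fw (i + 1) := by
          apply mul_left_cancel₀ (hβ (i+1)).ne'
          rw [← hc, ← hflin, hfeq]
        exact ⟨Or.inr (by linarith), by linarith⟩
    · -- `f (i+1) = flin (i+1)` : pure conservation argument
      have hubi := hub i (by omega)
      have hri := hrle (i + 1) (by omega) hm
      have hflin : flin fw (i + 1) = fw.betaf (i+1) * (flin fw i + rbar fw (i+1)) := rfl
      have hcanc : f i + r (i + 1) = flin fw i + rbar fw (i + 1) := by
        apply mul_left_cancel₀ (hβ (i+1)).ne'
        rw [← hc, ← hflin, ← hP2]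
      exact ⟨Or.inr (by linarith), by linarith⟩
  -- downward induction
  have hdown : ∀ j, j ≤ fw.K + 1 →
      P (fw.K + 1 - j) ∧ ∀ i, fw.K + 1 - j < i → i ≤ fw.K + 1 → r i = rbar fw i := by
    intro j
    induction j with
    | zero =>
      intro _
      constructor
      · simp only [Nat.sub_zero]
        exact Or.inl ⟨by omega, hexit2⟩
      · intro i h1 h2; omega
    | succ j ih =>
      intro hj
      obtain ⟨hP1, hr1⟩ := ih (by omega)
      have hidx : fw.K + 1 - j = (fw.K + 1 - (j + 1)) + 1 := by omega
      rw [hidx] at hP1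
      obtain ⟨hP2, hr2⟩ := hstep (fw.K + 1 - (j + 1)) (by omega) hP1
      refine ⟨hP2, ?_⟩
      intro i h1 h2
      rcases Nat.lt_or_ge (fw.K + 1 - j) i with hlt | hge
      · exact hr1 i hlt h2
      · have : i = fw.K + 1 - (j + 1) + 1 := by omega
        rw [this]; exact hr2
  obtain ⟨hP0, hrall⟩ := hdown (fw.K + 1) (le_refl _)
  simp only [Nat.sub_self] at hP0 hrall
  have hf0 : f 0 = flin fw 0 := by
    rcases hP0 with ⟨h1, -⟩ | h2
    · omega
    · exact h2
  -- forward induction for `f = flin`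
  have hff : ∀ i, i ≤ fw.K + 1 → f i = flin fw i := by
    intro i
    induction i with
    | zero => intro _; exact hf0
    | succ i ih =>
      intro hi
      have hc := hcons (i + 1) (by omega) hi
      simp only [Nat.add_sub_cancel] at hc
      have hflin : flin fw (i + 1) = fw.betaf (i+1) * (flin fw i + rbar fw (i+1)) := rfl
      rw [hc, hflin, ih (by omega), hrall (i + 1) (by omega) hi]
  -- `fbar = flin`
  have hfb : ∀ i, i ≤ fw.K + 1 → fbar fw i = flin fw i := by
    intro i
    induction i with
    | zero => intro _; rfl
    | succ i ih =>
      intro hi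
      have h1 : fbar fw (i + 1) =
          min (fw.betaf (i+1) * (fbar fw i + rbar fw (i+1))) (fw.Fd (i+1)) := rfl
      have h2 : flin fw (i + 1) = fw.betaf (i+1) * (flin fw i + rbar fw (i+1)) := rfl
      rw [h1, ih (by omega), ← h2]
      exact min_eq_left (hfeas (i + 1) (by omega) hi)
  refine ⟨fun i h1 h2 => hrall i (by omega) (by omega), fun i hi => ⟨hff i hi, hfb i hi⟩⟩
end

section
/- If λ1, λ2 : [0,1] → [0,1] are non-increasing with λ^ξ strictly decreasing on (ᾱ^ξ, 1], λ^ξ(α) = 1 iff α ≤ ᾱ^ξ, continuous on (0,1], and ᾱ1 + ᾱ2 < 1, and if moreover λ1(1−ᾱ2) < lim_{α→ᾱ2+} λ2(α) and λ2(1−ᾱ1) < lim_{α→ᾱ1+} λ1(α), then the equation λ1(α) = λ2(1−α) has exactly one solution α* and α* ∈ (ᾱ1, 1−ᾱ2). -/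
/-! The gap `α ↦ λ1 α - λ2 (1 - α)` is strictly decreasing on `(ᾱ1, 1 - ᾱ2)`, tends to
`L1 - λ2 (1 - ᾱ1) > 0` at the left end and to `λ1 (1 - ᾱ2) - L2 < 0` at the right end, so it has
exactly one zero there. No balanced split lies outside this interval: `α ≤ ᾱ1` forces
`λ1 α = 1`, hence `λ2 (1 - α) = 1` and `1 - α ≤ ᾱ2`, contradicting `ᾱ1 + ᾱ2 < 1`; the other
side is the same argument with the two queues swapped. -/

open Set Filter Topology

lemma tendsto_const_sub_nhdsLT (c a : ℝ) :
    Tendsto (fun x => c - x) (𝓝[<] (c - a)) (𝓝[>] a) := by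
  refine tendsto_nhdsWithin_iff.2 ⟨?_, ?_⟩
  · simpa using ((continuous_sub_left c).tendsto (c - a)).mono_left nhdsWithin_le_nhds
  · filter_upwards [self_mem_nhdsWithin] with x (hx : x < c - a)
    exact show a < c - x by linarith

def balanceGap (l1 l2 : ℝ → ℝ) (α : ℝ) : ℝ := l1 α - l2 (1 - α)

namespace balanceGap

variable {l1 l2 : ℝ → ℝ} {a1 a2 : ℝ}

lemma swap (α : ℝ) : balanceGap l2 l1 (1 - α) = -balanceGap l1 l2 α := by
  simp only [balanceGap, sub_sub_cancel, neg_sub]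

lemma continuousOn (hc1 : ContinuousOn l1 (Ioc 0 1)) (hc2 : ContinuousOn l2 (Ioc 0 1)) :
    ContinuousOn (balanceGap l1 l2) (Ioo 0 1) := by
  refine (hc1.mono Ioo_subset_Ioc_self).sub (hc2.comp (continuous_sub_left 1).continuousOn ?_)
  exact fun x hx => ⟨by linarith [hx.2], by linarith [hx.1]⟩

lemma strictAntiOn (hsa1 : StrictAntiOn l1 (Ioc a1 1)) (hsa2 : StrictAntiOn l2 (Ioc a2 1))
    (h1 : 0 ≤ a1) (h2 : 0 ≤ a2) : StrictAntiOn (balanceGap l1 l2) (Ioo a1 (1 - a2)) := by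
  intro x hx y hy hxy
  have hl1 : l1 y < l1 x := hsa1 ⟨hx.1, by linarith [hx.2]⟩ ⟨hy.1, by linarith [hy.2]⟩ hxy
  have hl2 : l2 (1 - x) < l2 (1 - y) :=
    hsa2 ⟨by linarith [hy.2], by linarith [hy.1]⟩ ⟨by linarith [hx.2], by linarith [hx.1]⟩
      (by linarith)
  simp only [balanceGap]
  linarith

lemma tendsto_nhdsGT {L1 : ℝ} (h0 : 0 ≤ a1) (h1 : a1 < 1) (hc2 : ContinuousOn l2 (Ioc 0 1))
    (hL1 : Tendsto l1 (𝓝[>] a1) (𝓝 L1)) :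
    Tendsto (balanceGap l1 l2) (𝓝[>] a1) (𝓝 (L1 - l2 (1 - a1))) := by
  have hreflect : Tendsto (fun α => 1 - α) (𝓝[>] a1) (𝓝[Ioc 0 1] (1 - a1)) := by
    refine tendsto_nhdsWithin_iff.2 ⟨?_, ?_⟩
    · exact ((continuous_sub_left 1).tendsto a1).mono_left nhdsWithin_le_nhds
    · filter_upwards [Ioo_mem_nhdsGT h1] with α hα
      exact ⟨by linarith [hα.2], by linarith [hα.1]⟩
  exact hL1.sub ((hc2 _ ⟨by linarith, by linarith⟩).tendsto.comp hreflect)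

lemma tendsto_nhdsLT {L2 : ℝ} (h0 : 0 ≤ a2) (h1 : a2 < 1) (hc1 : ContinuousOn l1 (Ioc 0 1))
    (hL2 : Tendsto l2 (𝓝[>] a2) (𝓝 L2)) :
    Tendsto (balanceGap l1 l2) (𝓝[<] (1 - a2)) (𝓝 (l1 (1 - a2) - L2)) := by
  have h := ((tendsto_nhdsGT h0 h1 hc1 hL2).comp (tendsto_const_sub_nhdsLT 1 a2)).neg
  simpa only [Function.comp_def, swap, neg_neg, neg_sub] using h

end balanceGap

lemma lt_of_balance {l1 l2 : ℝ → ℝ} {a1 a2 β : ℝ}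
    (h1 : ∀ x ∈ Icc (0:ℝ) 1, x ≤ a1 → l1 x = 1) (h2 : ∀ x ∈ Icc (0:ℝ) 1, l2 x = 1 → x ≤ a2)
    (hsum : a1 + a2 < 1) (hβ : β ∈ Icc (0:ℝ) 1) (hbal : l1 β = l2 (1 - β)) : a1 < β := by
  by_contra! hle
  have hβ' : 1 - β ∈ Icc (0:ℝ) 1 := ⟨by linarith [hβ.2], by linarith [hβ.1]⟩
  have := h2 _ hβ' (hbal ▸ h1 β hβ hle)
  linarith

theorem split_ratio_balance_unique_general
    (l1 l2 : ℝ → ℝ) (a1 a2 : ℝ)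
    (ha1 : a1 ∈ Set.Icc (0:ℝ) 1) (ha2 : a2 ∈ Set.Icc (0:ℝ) 1)
    (hsum : a1 + a2 < 1)
    (hsa1 : StrictAntiOn l1 (Set.Ioc a1 1)) (hsa2 : StrictAntiOn l2 (Set.Ioc a2 1))
    (hiff1 : ∀ x ∈ Set.Icc (0:ℝ) 1, (l1 x = 1 ↔ x ≤ a1))
    (hiff2 : ∀ x ∈ Set.Icc (0:ℝ) 1, (l2 x = 1 ↔ x ≤ a2))
    (hc1 : ContinuousOn l1 (Set.Ioc 0 1)) (hc2 : ContinuousOn l2 (Set.Ioc 0 1))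
    (L1 L2 : ℝ)
    (hL1 : Filter.Tendsto l1 (nhdsWithin a1 (Set.Ioi a1)) (nhds L1))
    (hL2 : Filter.Tendsto l2 (nhdsWithin a2 (Set.Ioi a2)) (nhds L2))
    (hlt1 : l1 (1 - a2) < L2) (hlt2 : l2 (1 - a1) < L1) :
    ∃ α : ℝ, α ∈ Set.Ioo a1 (1 - a2) ∧ l1 α = l2 (1 - α) ∧
      ∀ β ∈ Set.Icc (0:ℝ) 1, l1 β = l2 (1 - β) → β = α := by
  have hlt : a1 < 1 - a2 := by linarith
  have hcont : ContinuousOn (balanceGap l1 l2) (Ioo a1 (1 - a2)) :=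
    (balanceGap.continuousOn hc1 hc2).mono (Ioo_subset_Ioo ha1.1 (by linarith [ha2.1]))
  obtain ⟨α, hα, hzero⟩ : (0:ℝ) ∈ balanceGap l1 l2 '' Ioo a1 (1 - a2) :=
    isPreconnected_Ioo.intermediate_value_Ioo (le_principal_iff.2 (Ioo_mem_nhdsLT hlt))
      (le_principal_iff.2 (Ioo_mem_nhdsGT hlt)) hcont
      (balanceGap.tendsto_nhdsLT ha2.1 (by linarith [ha1.1]) hc1 hL2)
      (balanceGap.tendsto_nhdsGT ha1.1 (by linarith [ha2.1]) hc2 hL1)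
      ⟨by linarith, by linarith⟩
  refine ⟨α, hα, sub_eq_zero.1 hzero, fun β hβ hbal => ?_⟩
  have hβα : β ∈ Ioo a1 (1 - a2) := by
    refine ⟨lt_of_balance (fun x hx => (hiff1 x hx).2) (fun x hx => (hiff2 x hx).1) hsum hβ hbal,
      ?_⟩
    have hβ' : 1 - β ∈ Icc (0:ℝ) 1 := ⟨by linarith [hβ.2], by linarith [hβ.1]⟩
    have := lt_of_balance (l1 := l2) (l2 := l1) (fun x hx => (hiff2 x hx).2)
      (fun x hx => (hiff1 x hx).1) (by linarith) hβ' (by rw [sub_sub_cancel, hbal])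
    linarith
  exact (balanceGap.strictAntiOn hsa1 hsa2 ha1.1 ha2.1).injOn hβα hα
    (by rw [hzero, balanceGap, hbal, sub_self])

/-- Queue growth rate minimization, case `ᾱ¹ + ᾱ² < 1` with no dominating
boundary: if `λ1, λ2 : [0,1] → [0,1]` are non-increasing, with `λ^ξ α = 1` iff
`α ≤ ᾱ^ξ` (on `[0,1]`), strictly decreasing on `(ᾱ^ξ, 1]`, continuous on
`(0,1]`, `ᾱ¹ + ᾱ² < 1`, and
`λ1(1-ᾱ²) < lim_{α→ᾱ²⁺} λ2(α)` and `λ2(1-ᾱ¹) < lim_{α→ᾱ¹⁺} λ1(α)`,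
then the balance equation `λ1 α = λ2 (1-α)` has exactly one solution `α*` in
`[0,1]`, and `α* ∈ (ᾱ¹, 1-ᾱ²)`. -/
theorem split_ratio_balance_unique
    (l1 l2 : ℝ → ℝ) (a1 a2 : ℝ)
    (ha1 : a1 ∈ Set.Icc (0:ℝ) 1) (ha2 : a2 ∈ Set.Icc (0:ℝ) 1)
    (hsum : a1 + a2 < 1)
    (hm1 : AntitoneOn l1 (Set.Icc 0 1)) (hm2 : AntitoneOn l2 (Set.Icc 0 1))
    (hsa1 : StrictAntiOn l1 (Set.Ioc a1 1)) (hsa2 : StrictAntiOn l2 (Set.Ioc a2 1))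
    (hmap1 : ∀ x ∈ Set.Icc (0:ℝ) 1, l1 x ∈ Set.Icc (0:ℝ) 1)
    (hmap2 : ∀ x ∈ Set.Icc (0:ℝ) 1, l2 x ∈ Set.Icc (0:ℝ) 1)
    (hiff1 : ∀ x ∈ Set.Icc (0:ℝ) 1, (l1 x = 1 ↔ x ≤ a1))
    (hiff2 : ∀ x ∈ Set.Icc (0:ℝ) 1, (l2 x = 1 ↔ x ≤ a2))
    (hc1 : ContinuousOn l1 (Set.Ioc 0 1)) (hc2 : ContinuousOn l2 (Set.Ioc 0 1))
    (L1 L2 : ℝ)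
    (hL1 : Filter.Tendsto l1 (nhdsWithin a1 (Set.Ioi a1)) (nhds L1))
    (hL2 : Filter.Tendsto l2 (nhdsWithin a2 (Set.Ioi a2)) (nhds L2))
    (hlt1 : l1 (1 - a2) < L2) (hlt2 : l2 (1 - a1) < L1) :
    ∃ α : ℝ, α ∈ Set.Ioo a1 (1 - a2) ∧ l1 α = l2 (1 - α) ∧
      ∀ β ∈ Set.Icc (0:ℝ) 1, l1 β = l2 (1 - β) → β = α :=
  split_ratio_balance_unique_general l1 l2 a1 a2 ha1 ha2 hsum hsa1 hsa2 hiff1 hiff2 hc1 hc2 L1 L2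
    hL1 hL2 hlt1 hlt2
end

section
/- (Free flow preservation.) Suppose the toll lane has equilibrium densities n_i^e = f_i^e/(β_i^f v_i) with equilibrium flows satisfying f_i^e = β_i^f f_{i−1}^e at links without on-ramps and F_i^s ≥ f_i^e/β_i^f for all i. If n_i(t) ≤ n_i^e for all i, and at every entrance link i_m the flow satisfies r_{i_m}(t) + f_{i_m−1}^d(t) ≤ f_{i_m}^e/β_{i_m}^f, then n_i(t+1) ≤ n_i^e for all i. -/
/-- Free-flow preservation (Theorem 3): consider the toll lane as a CTM
freeway with links `1,…,K+1` (link `0` is a fictitious empty link), demand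
`min (β_i v_i n_i) F_i^d`, supply `min (w_i (N_i - n_i)) F_i^s`, node flows
`f_i = min{demand_i, supply_{i+1} - r_{i+1}}` (exit flow equals demand), and
dynamics `n_i(t+1) = n_i + f_{i-1} + r_i - f_i / β_i`.  Let `n^e_i =
f^e_i / (β_i v_i)` be a free-flow equilibrium (`f^e_i ≤ F_i^d`,
`F_i^s ≥ f^e_i / β_i`, `f^e_i = β_i f^e_{i-1}` at links without on-ramps).
If `n_i(t) ≤ n^e_i` for all `i` and at every entrance
`r_i(t) + f^d_{i-1}(t) ≤ f^e_i / β_i`, then `n_i(t+1) ≤ n^e_i` for all `i`. -/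
theorem freeflow_preservation
    (K : ℕ) (v w betaf Fd Fs Nmax : ℕ → ℝ) (ramp : ℕ → Prop)
    (hv : ∀ i, 0 < v i ∧ v i ≤ 1) (hw : ∀ i, 0 < w i)
    (hβ : ∀ i, 0 < betaf i ∧ betaf i ≤ 1)
    (hFd : ∀ i, 0 ≤ Fd i)
    (hCFL : ∀ i, Fd i / (betaf i * v i) + Fs i / w i ≤ Nmax i)
    (fe : ℕ → ℝ) (hfe0 : fe 0 = 0) (hfe : ∀ i, 0 ≤ fe i)
    (hfeFd : ∀ i, 1 ≤ i → i ≤ K + 1 → fe i ≤ Fd i)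
    (hFs : ∀ i, 1 ≤ i → i ≤ K + 1 → fe i / betaf i ≤ Fs i)
    (hnoramp : ∀ i, 1 ≤ i → i ≤ K + 1 → ¬ ramp i → fe i = betaf i * fe (i - 1))
    (n r : ℕ → ℝ) (hn0 : n 0 = 0) (hnn : ∀ i, 0 ≤ n i)
    (hr : ∀ i, 0 ≤ r i) (hrnr : ∀ i, ¬ ramp i → r i = 0)
    (hle : ∀ i, 1 ≤ i → i ≤ K + 1 → n i ≤ fe i / (betaf i * v i))
    (hramp : ∀ i, 1 ≤ i → i ≤ K + 1 → ramp i →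
      r i + min (betaf (i - 1) * v (i - 1) * n (i - 1)) (Fd (i - 1)) ≤
        fe i / betaf i)
    (f : ℕ → ℝ) (hf0 : f 0 = 0)
    (hf : ∀ i, 1 ≤ i → i ≤ K →
      f i = min (min (betaf i * v i * n i) (Fd i))
              (min (w (i + 1) * (Nmax (i + 1) - n (i + 1))) (Fs (i + 1)) - r (i + 1)))
    (hfK : f (K + 1) = min (betaf (K + 1) * v (K + 1) * n (K + 1)) (Fd (K + 1))) :
    ∀ i, 1 ≤ i → i ≤ K + 1 →
      n i + f (i - 1) + r i - f i / betaf i ≤ fe i / (betaf i * v i) := by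
  have hbv : ∀ i, 0 < betaf i * v i := fun i => mul_pos (hβ i).1 (hv i).1
  -- demand at equilibrium-bounded density is below fe
  have hdem : ∀ i, 1 ≤ i → i ≤ K + 1 → betaf i * v i * n i ≤ fe i := by
    intro i h1 h2
    have h := mul_le_mul_of_nonneg_left (hle i h1 h2) (hbv i).le
    have heq : betaf i * v i * (fe i / (betaf i * v i)) = fe i := by
      field_simp
      exact mul_div_cancel_left₀ _ (ne_of_gt (hbv i))
    linarith [heq ▸ h]
  have hdmin : ∀ i, 1 ≤ i → i ≤ K + 1 →
      min (betaf i * v i * n i) (Fd i) = betaf i * v i * n i := by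
    intro i h1 h2
    exact min_eq_left (le_trans (hdem i h1 h2) (hfeFd i h1 h2))
  -- the flow equals the demand everywhere
  have hfeq : ∀ i, 1 ≤ i → i ≤ K + 1 → f i = betaf i * v i * n i := by
    intro i h1 h2
    rcases eq_or_lt_of_le h2 with h2' | h2'
    · subst h2'
      rw [hfK]
      exact hdmin (K + 1) (by omega) (by omega)
    · have hiK : i ≤ K := by omega
      rw [hf i h1 hiK, hdmin i h1 h2]
      apply min_eq_left
      -- the downstream supply exceeds fe (i+1) / betaf (i+1)
      have hFs' := hFs (i + 1) (by omega) (by omega)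
      have hS : fe (i + 1) / betaf (i + 1) ≤
          min (w (i + 1) * (Nmax (i + 1) - n (i + 1))) (Fs (i + 1)) := by
        refine le_min ?_ hFs'
        have hn1 : n (i + 1) ≤ Fd (i + 1) / (betaf (i + 1) * v (i + 1)) :=
          le_trans (hle (i + 1) (by omega) (by omega))
            ((div_le_div_iff_of_pos_right (hbv (i + 1))).mpr (hfeFd (i + 1) (by omega) (by omega)))
        have hcfl := hCFL (i + 1)
        have h3 : Fs (i + 1) / w (i + 1) ≤ Nmax (i + 1) - n (i + 1) := by linarith
        have h4 := (div_le_iff₀ (hw (i + 1))).mp h3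
        calc fe (i + 1) / betaf (i + 1) ≤ Fs (i + 1) := hFs'
          _ ≤ (Nmax (i + 1) - n (i + 1)) * w (i + 1) := h4
          _ = w (i + 1) * (Nmax (i + 1) - n (i + 1)) := mul_comm _ _
      by_cases hR : ramp (i + 1)
      · have h5 := hramp (i + 1) (by omega) (by omega) hR
        simp only [Nat.add_sub_cancel] at h5
        rw [hdmin i h1 h2] at h5
        linarith
      · have hr0 := hrnr (i + 1) hR
        have hfe' := hnoramp (i + 1) (by omega) (by omega) hR
        simp only [Nat.add_sub_cancel] at hfe'
        have h6 : fe (i + 1) / betaf (i + 1) = fe i := by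
          rw [hfe', mul_div_cancel_left₀ _ (ne_of_gt (hβ (i + 1)).1)]
        have hd := hdem i h1 h2
        linarith
  -- inflow bound: f (i-1) + r i ≤ fe i / betaf i
  have hC : ∀ i, 1 ≤ i → i ≤ K + 1 → f (i - 1) + r i ≤ fe i / betaf i := by
    intro i h1 h2
    have hfprev : f (i - 1) ≤ min (betaf (i - 1) * v (i - 1) * n (i - 1)) (Fd (i - 1)) := by
      rcases eq_or_lt_of_le h1 with h1' | h1'
      · subst h1'
        norm_num [hf0, hn0]
        exact hFd 0
      · exact le_of_eq ((hfeq (i - 1) (by omega) (by omega)).trans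
          (hdmin (i - 1) (by omega) (by omega)).symm)
    by_cases hR : ramp i
    · have h5 := hramp i h1 h2 hR
      linarith
    · have hr0 := hrnr i hR
      have hfe' := hnoramp i h1 h2 hR
      have hfeb : fe i / betaf i = fe (i - 1) := by
        rw [hfe', mul_div_cancel_left₀ _ (ne_of_gt (hβ i).1)]
      have hfp2 : f (i - 1) ≤ fe (i - 1) := by
        rcases eq_or_lt_of_le h1 with h1' | h1'
        · subst h1'
          norm_num [hf0, hfe0]
        · exact le_trans (le_of_eq (hfeq (i - 1) (by omega) (by omega)))
            (hdem (i - 1) (by omega) (by omega))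
      linarith
  intro i h1 h2
  have hfi := hfeq i h1 h2
  have hA := hC i h1 h2
  have hni := hle i h1 h2
  have hvle := (hv i).2
  have hβp := (hβ i).1
  have hvp := (hv i).1
  have hdiv : f i / betaf i = v i * n i := by
    rw [hfi, mul_assoc, mul_div_cancel_left₀ _ (ne_of_gt hβp)]
  rw [hdiv]
  have hE : fe i / betaf i = fe i / (betaf i * v i) * v i := by
    rw [div_mul_eq_mul_div, mul_comm (betaf i) (v i), ← div_div,
      mul_div_assoc, div_self (ne_of_gt hvp), mul_one]
  nlinarith [mul_nonneg (sub_nonneg.2 hni) (sub_nonneg.2 hvle)]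
end
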